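/- For every κ ≥ 1 and all words ω, η ∈ {0,1}^κ of the same length κ, one has λ(I_ω) = λ(I_η), and moreover M_{ω0 1̄} − M_{ω1 0̄} = M_{η0 1̄} − M_{η1 0̄}; that is, both the length of I_ω and the quantity M_{ω0 1̄} − M_{ω1 0̄} depend only on the length |ω| and not on ω itself. -/

import Mathlib

open MeasureTheory Filter Topology

/-- The limiting cumulative distribution function `F_ε(z)` of the approximation
coefficients, for a generalised α-Lüroth expansion determined by the sequence
`t` (1-indexed, `t 1 = 1`) and the sign sequence `ε` (0-indexed: `ε n` is the
paper's `ε_{n+1}`).  Here `a_n = t n - t (n+1)` and the `n`-th summand is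
`a_n` if `a_n / t_{n+1-ε_n} < z` and `t_{n+1-ε_n}·z` otherwise. -/
noncomputable def F (t : ℕ → ℝ) (ε : ℕ → Fin 2) (z : ℝ) : ℝ :=
  ∑' n : ℕ,
    if (t (n + 1) - t (n + 2)) / t (n + 2 - (ε n : ℕ)) < z
    then t (n + 1) - t (n + 2)
    else t (n + 2 - (ε n : ℕ)) * z

/-- The expected average value `M_ε = ∫_[0,1] (1 - F_ε) dλ`. -/
noncomputable def Mavg (t : ℕ → ℝ) (ε : ℕ → Fin 2) : ℝ :=
  ∫ z in Set.Icc (0 : ℝ) 1, (1 - F t ε z)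

/-- `t` generates an α-Lüroth partition: `(t_n)_{n ≥ 1}` is a strictly decreasing
sequence in `(0,1]` with `t 1 = 1` tending to `0`. -/
structure IsLurothSeq (t : ℕ → ℝ) : Prop where
  t_one : t 1 = 1
  pos : ∀ n, 1 ≤ n → 0 < t n
  anti : ∀ n, 1 ≤ n → t (n + 1) < t n
  tendsto_zero : Tendsto t atTop (nhds 0)

/-- Concatenation `ωε` of a finite word `ω ∈ {0,1}^n` with a sequence `ε ∈ {0,1}^ℕ`. -/
def cat {n : ℕ} (w : Fin n → Fin 2) (ε : ℕ → Fin 2) : ℕ → Fin 2 :=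
  fun k => if h : k < n then w ⟨k, h⟩ else ε (k - n)

/-- The interval `I_ω = [M_{ω1̄}, M_{ω0̄}]`. -/
noncomputable def Iword (t : ℕ → ℝ) {n : ℕ} (w : Fin n → Fin 2) : Set ℝ :=
  Set.Icc (Mavg t (cat w fun _ => 1)) (Mavg t (cat w fun _ => 0))

/-- The set `𝓜 = {M_ε : ε ∈ {0,1}^ℕ}`. -/
noncomputable def calM (t : ℕ → ℝ) : Set ℝ :=
  Set.range (Mavg t)

/-- The quantity `g(k) = ∫_[0,1] (f_k^1 - f_k^0) dλ`. -/
noncomputable def gseq (t : ℕ → ℝ) (k : ℕ) : ℝ :=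
  if t (k + 1) / t k ≤ 1 / 2 then
    t k / 2 - t (k + 1) / 2 - (t (k + 1)) ^ 2 / (2 * t k)
  else
    (t k) ^ 2 / (2 * t (k + 1)) - (t (k + 1)) ^ 2 / (2 * t k)
      + 3 * t (k + 1) / 2 - 3 * t k / 2

/-- The gap/overlap function `G(n) = g(n+1) - Σ_{k ≥ n+2} g(k)`. -/
noncomputable def Gseq (t : ℕ → ℝ) (n : ℕ) : ℝ :=
  gseq t (n + 1) - ∑' k : ℕ, gseq t (n + 2 + k)

/-- The common length `I(n)` of the intervals `I_ω` for `ω ∈ {0,1}^n`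
(computed from the all-zeros word `ω = 0^n`). -/
noncomputable def Ilen (t : ℕ → ℝ) (n : ℕ) : ℝ :=
  Mavg t (fun _ => 0) - Mavg t (fun k => if k < n then 0 else 1)

/-- A Cantor set in `ℝ`: a nonempty compact set with empty interior and
no isolated points. -/
def IsCantorSet (S : Set ℝ) : Prop :=
  S.Nonempty ∧ IsCompact S ∧ interior S = ∅ ∧ ∀ x ∈ S, AccPt x (Filter.principal S)

section AuxLemmas
variable {t : ℕ → ℝ} (ht : IsLurothSeq t)
include ht

lemma ha_pos (n : ℕ) : 0 < t (n + 1) - t (n + 2) :=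
  sub_pos.2 (ht.anti (n + 1) (by omega))

lemma ht_pos' (n : ℕ) (e : Fin 2) : 0 < t (n + 2 - (e : ℕ)) :=
  ht.pos _ (by have := e.is_le; omega)

/-- the `n`-th summand of `F`, rewritten as a min. -/
lemma term_eq_min (ε : ℕ → Fin 2) (z : ℝ) (n : ℕ) :
    (if (t (n + 1) - t (n + 2)) / t (n + 2 - (ε n : ℕ)) < z
      then t (n + 1) - t (n + 2)
      else t (n + 2 - (ε n : ℕ)) * z)
      = min (t (n + 1) - t (n + 2)) (t (n + 2 - (ε n : ℕ)) * z) := by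
  have hp := ht_pos' ht n (ε n)
  split_ifs with h
  · rw [div_lt_iff₀ hp] at h
    rw [min_eq_left]; nlinarith
  · rw [not_lt, le_div_iff₀ hp] at h
    rw [min_eq_right]; nlinarith

lemma summable_a : Summable (fun n => t (n + 1) - t (n + 2)) := by
  apply summable_of_sum_range_le (c := t 1) (fun n => (ha_pos ht n).le)
  intro n
  have : ∑ i ∈ Finset.range n, (t (i + 1) - t (i + 2)) = t 1 - t (n + 1) :=
    Finset.sum_range_sub' (fun i => t (i + 1)) n
  rw [this]
  have := ht.pos (n + 1) (by omega)
  linarith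

lemma summable_term (ε : ℕ → Fin 2) {z : ℝ} (hz : 0 ≤ z) :
    Summable (fun n => if (t (n + 1) - t (n + 2)) / t (n + 2 - (ε n : ℕ)) < z
      then t (n + 1) - t (n + 2) else t (n + 2 - (ε n : ℕ)) * z) := by
  apply Summable.of_nonneg_of_le _ _ (summable_a ht)
  · intro n
    rw [term_eq_min ht]
    exact le_min (ha_pos ht n).le (mul_nonneg (ht_pos' ht n (ε n)).le hz)
  · intro n
    rw [term_eq_min ht]
    exact min_le_left _ _

lemma F_monotoneOn (ε : ℕ → Fin 2) : MonotoneOn (F t ε) (Set.Icc 0 1) := by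
  intro z hz z' hz' hle
  apply Summable.tsum_le_tsum _ (summable_term ht ε hz.1) (summable_term ht ε hz'.1)
  intro n
  rw [term_eq_min ht, term_eq_min ht]
  exact min_le_min le_rfl (mul_le_mul_of_nonneg_left hle (ht_pos' ht n (ε n)).le)

lemma integrableOn_one_sub_F (ε : ℕ → Fin 2) :
    IntegrableOn (fun z => 1 - F t ε z) (Set.Icc (0:ℝ) 1) volume :=
  (integrableOn_const (by simp) (by simp)).sub
    ((F_monotoneOn ht ε).integrableOn_isCompact isCompact_Icc)

lemma Mavg_cat_sub {κ : ℕ} (w η : Fin κ → Fin 2) (ε ε' : ℕ → Fin 2) :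
    Mavg t (cat w ε) - Mavg t (cat w ε') = Mavg t (cat η ε) - Mavg t (cat η ε') := by
  have hint := integrableOn_one_sub_F ht
  unfold Mavg
  rw [← integral_sub (hint _) (hint _), ← integral_sub (hint _) (hint _)]
  apply setIntegral_congr_fun measurableSet_Icc
  intro z hz
  simp only
  have hsum : ∀ σ : ℕ → Fin 2,
      Summable (fun n => if (t (n + 1) - t (n + 2)) / t (n + 2 - ((σ n : Fin 2) : ℕ)) < z
        then t (n + 1) - t (n + 2) else t (n + 2 - ((σ n : Fin 2) : ℕ)) * z) :=
    fun σ => summable_term ht σ hz.1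
  have key : ∀ σ σ' : ℕ → Fin 2, (1 - F t σ z) - (1 - F t σ' z) = F t σ' z - F t σ z := by
    intro σ σ'; ring
  rw [key, key]
  unfold F
  rw [← Summable.tsum_sub (hsum _) (hsum _), ← Summable.tsum_sub (hsum _) (hsum _)]
  apply tsum_congr
  intro n
  by_cases h : n < κ
  · simp [cat, h]
  · simp [cat, h]

end AuxLemmas

/-- For `κ ≥ 1` and words `ω, η ∈ {0,1}^κ` of the same length,
`λ(I_ω) = λ(I_η)` and `M_{ω0 1̄} − M_{ω1 0̄} = M_{η0 1̄} − M_{η1 0̄}`. -/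
theorem Iword_length_eq (t : ℕ → ℝ) (ht : IsLurothSeq t)
    (κ : ℕ) (hκ : 1 ≤ κ) (w η : Fin κ → Fin 2) :
    volume (Iword t w) = volume (Iword t η) ∧
      Mavg t (cat w (fun k => if k = 0 then 0 else 1)) -
          Mavg t (cat w (fun k => if k = 0 then 1 else 0)) =
        Mavg t (cat η (fun k => if k = 0 then 0 else 1)) -
          Mavg t (cat η (fun k => if k = 0 then 1 else 0)) := by
  constructor
  · unfold Iword
    rw [Real.volume_Icc, Real.volume_Icc]
    congr 1
    have := Mavg_cat_sub ht w η (fun _ => 0) (fun _ => 1)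
    linarith
  · have := Mavg_cat_sub ht w η (fun k => if k = 0 then 0 else 1)
      (fun k => if k = 0 then 1 else 0)
    linarith
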